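/- Maxoids satisfy the semigraphoid decomposition/contraction property: for any weighted DAG (G,C) and pairwise disjoint sets I,J,K,L of vertices, I is C*-separated from JK given L if and only if I is C*-separated from J given L and I is C*-separated from K given JL. -/

import Mathlib

/-!  Common definitions: weighted DAGs, paths, critical paths,
critical DAGs and C*-separation, following Boege–Ferry–Hollering–Nowell,
"Polyhedral aspects of maxoids". -/

variable {V : Type*}

/-- `p` is a directed path (vertex list) from `i` to `j` in the digraph `E`. -/
def IsPath (E : V → V → Prop) (i j : V) (p : List V) : Prop :=
  p.head? = some i ∧ p.getLast? = some j ∧ List.Chain' E p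

/-- The weight of a path: the sum of the edge weights along consecutive vertices. -/
def pathWeight (c : V → V → ℝ) (p : List V) : ℝ :=
  ((p.zip p.tail).map fun q => c q.1 q.2).sum

/-- `p` is a critical (maximum-weight) path from `i` to `j`. -/
def IsCritical (E : V → V → Prop) (c : V → V → ℝ) (i j : V) (p : List V) : Prop :=
  IsPath E i j p ∧ ∀ q, IsPath E i j q → pathWeight c q ≤ pathWeight c p

/-- The internal vertices of a path (all but the two endpoints). -/
def internalVerts (p : List V) : List V := p.tail.dropLast

/-- Edge `i → j` of the critical DAG `D*(C,L)`: there is a directed `i`–`j`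
path in `G` and no critical `i`–`j` path has an internal vertex in `L`. -/
def critEdge (E : V → V → Prop) (c : V → V → ℝ) (L : Set V) (i j : V) : Prop :=
  (∃ p, IsPath E i j p) ∧
    ∀ p, IsCritical E c i j p → ∀ v ∈ internalVerts p, v ∉ L

/-- `i` and `j` are C*-connected given `L`: some path of one of the five
permitted shapes joins them in the critical DAG `D*(C,L)` (colliders must lie
in `L`, non-colliders outside `L`, at most one collider). -/
def starConn (E : V → V → Prop) (c : V → V → ℝ) (L : Set V) (i j : V) : Prop :=
  let D := critEdge E c L
  D i j ∨ D j i ∨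
  (∃ p, p ∉ L ∧ D p i ∧ D p j) ∨
  (∃ l, l ∈ L ∧ D i l ∧ D j l) ∨
  (∃ p l, p ∉ L ∧ l ∈ L ∧ D p i ∧ D p l ∧ D j l) ∨
  (∃ p l, p ∉ L ∧ l ∈ L ∧ D p j ∧ D p l ∧ D i l) ∨
  (∃ p q l, p ∉ L ∧ q ∉ L ∧ l ∈ L ∧ D p i ∧ D p l ∧ D q l ∧ D q j)

/-- C*-separation of two vertices given `L`. -/
def CSep (E : V → V → Prop) (c : V → V → ℝ) (L : Set V) (i j : V) : Prop :=
  ¬ starConn E c L i j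

/-- C*-connection of two sets of vertices given `L`. -/
def starConnSets (E : V → V → Prop) (c : V → V → ℝ) (L I J : Set V) : Prop :=
  ∃ i ∈ I, ∃ j ∈ J, starConn E c L i j

/-- C*-separation of two sets of vertices given `L`. -/
def CSepSets (E : V → V → Prop) (c : V → V → ℝ) (L I J : Set V) : Prop :=
  ¬ starConnSets E c L I J

/-- The digraph `E` is acyclic. -/
def IsAcyclic (E : V → V → Prop) : Prop := ∀ v, ¬ Relation.TransGen E v v

/-- A weight matrix is generic: between any two vertices the maximum-weight
path is unique whenever one exists. -/
def Generic (E : V → V → Prop) (c : V → V → ℝ) : Prop :=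
  ∀ i j p q, IsCritical E c i j p → IsCritical E c i j q → p = q

/-- The set of generic weight matrices inducing exactly the same critical
paths as `c`. -/
def sameCritSet (E : V → V → Prop) (c : V → V → ℝ) : Set (V → V → ℝ) :=
  {c' | Generic E c' ∧ ∀ i j p, IsCritical E c' i j p ↔ IsCritical E c i j p}

/-!
Enlarging the conditioning set from `L` to `J ∪ L` can only delete edges of the critical DAG,
and an edge `a → b` of `D*(C,L)` that disappears is replaced by two edges `a → v → b` of
`D*(C,L)` with `v ∈ J`: split a critical `a`–`b` path at an internal vertex `v ∈ J`; its two
halves are critical, and splicing any other critical half back in gives a critical `a`–`b` path.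
Hence a C*-connecting path given `J ∪ L` is one given `L`, unless its collider lies in `J`, in
which case the part of it leading to the collider C*-connects to `J` given `L`. Conversely,
a C*-connecting path given `L` either survives given `J ∪ L`, or a deleted edge or a non-collider
in `J` leaves behind a C*-connecting path given `L` to a vertex of `J`.
-/

section Paths

variable {E : V → V → Prop} {c : V → V → ℝ} {a b v : V}

lemma pathWeight_append_cons (c : V → V → ℝ) (s t : List V) (v : V) :
    pathWeight c (s ++ v :: t) = pathWeight c (s ++ [v]) + pathWeight c (v :: t) := by
  induction s with
  | nil => simp [pathWeight]
  | cons x s ih =>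
    cases s with
    | nil => simp [pathWeight]
    | cons y s =>
      simp only [List.cons_append, pathWeight, List.tail_cons, List.zip_cons_cons,
        List.map_cons, List.sum_cons] at ih ⊢
      rw [ih, add_assoc]

lemma isPath_append_cons_iff {s t : List V} :
    IsPath E a b (s ++ v :: t) ↔ IsPath E a v (s ++ [v]) ∧ IsPath E v b (v :: t) := by
  have hhead : (s ++ v :: t).head? = (s ++ [v]).head? := by cases s <;> rfl
  have hlast : (s ++ v :: t).getLast? = (v :: t).getLast? := List.getLast?_append_cons s v t
  constructor
  · rintro ⟨h1, h2, h3⟩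
    exact ⟨⟨hhead.symm.trans h1, List.getLast?_concat, (List.isChain_split.1 h3).1⟩,
      rfl, hlast.symm.trans h2, (List.isChain_split.1 h3).2⟩
  · rintro ⟨⟨h1, -, h3⟩, -, h2, h4⟩
    exact ⟨hhead.trans h1, hlast.trans h2, List.isChain_split.2 ⟨h3, h4⟩⟩

lemma internalVerts_append_singleton (q : List V) (v : V) :
    internalVerts (q ++ [v]) = q.tail := by
  cases q <;> simp [internalVerts]

lemma mem_internalVerts_append_cons_of_mem_tail {s t : List V} {x : V}
    (hx : x ∈ s.tail) : x ∈ internalVerts (s ++ v :: t) := by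
  cases s with
  | nil => simp at hx
  | cons y s => simp_all [internalVerts, List.dropLast_append_of_ne_nil]

lemma mem_internalVerts_append_cons_of_mem_dropLast {s t : List V} {x : V}
    (hx : x ∈ t.dropLast) : x ∈ internalVerts (s ++ v :: t) := by
  have ht : t ≠ [] := by rintro rfl; simp at hx
  cases s <;>
    simp_all [internalVerts, List.dropLast_append_of_ne_nil, List.dropLast_cons_of_ne_nil]

lemma IsCritical.of_weight_le {p q : List V} (hp : IsCritical E c a b p) (hq : IsPath E a b q)
    (hw : pathWeight c p ≤ pathWeight c q) : IsCritical E c a b q :=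
  ⟨hq, fun r hr => (hp.2 r hr).trans hw⟩

lemma IsCritical.replace_prefix {s t q : List V} (hp : IsCritical E c a b (s ++ v :: t))
    (hq : IsCritical E c a v (q ++ [v])) : IsCritical E c a b (q ++ v :: t) := by
  obtain ⟨hs, ht⟩ := isPath_append_cons_iff.1 hp.1
  refine hp.of_weight_le (isPath_append_cons_iff.2 ⟨hq.1, ht⟩) ?_
  rw [pathWeight_append_cons c q t, pathWeight_append_cons c s t]
  linarith [hq.2 _ hs]

lemma IsCritical.replace_suffix {s t r : List V} (hp : IsCritical E c a b (s ++ v :: t))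
    (hr : IsCritical E c v b (v :: r)) : IsCritical E c a b (s ++ v :: r) := by
  obtain ⟨hs, ht⟩ := isPath_append_cons_iff.1 hp.1
  refine hp.of_weight_le (isPath_append_cons_iff.2 ⟨hs, hr.1⟩) ?_
  rw [pathWeight_append_cons c s r, pathWeight_append_cons c s t]
  linarith [hr.2 _ ht]

end Paths

section Connection

variable {D D' : V → V → Prop} {J L L' : Set V} {a b i x : V}

/-- In the digraph `D`, a path from `a` whose last edge points into `b` and which has no
collider: the edge `a → b`, or a fork `a ← p → b` at a non-collider `p ∉ L`. -/
def IsArm (D : V → V → Prop) (L : Set V) (a b : V) : Prop :=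
  D a b ∨ ∃ p ∉ L, D p a ∧ D p b

def IsTrek (D : V → V → Prop) (L : Set V) (a b : V) : Prop :=
  IsArm D L a b ∨ IsArm D L b a

/-- `starConn` with the critical DAG replaced by an arbitrary digraph `D`; its seven shapes are
regrouped into the collider-free ones and those with a single collider `l ∈ L`. -/
def StarConnIn (D : V → V → Prop) (L : Set V) (i j : V) : Prop :=
  IsTrek D L i j ∨ ∃ l ∈ L, IsArm D L i l ∧ IsArm D L j l

lemma starConn_iff_starConnIn (E : V → V → Prop) (c : V → V → ℝ) (L : Set V) (i j : V) :
    starConn E c L i j ↔ StarConnIn (critEdge E c L) L i j := by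
  simp only [starConn, StarConnIn, IsTrek, IsArm]
  constructor
  · rintro (h | h | ⟨p, hp, hpi, hpj⟩ | ⟨l, hl, hil, hjl⟩ | ⟨p, l, hp, hl, hpi, hpl, hjl⟩ |
      ⟨p, l, hp, hl, hpj, hpl, hil⟩ | ⟨p, q, l, hp, hq, hl, hpi, hpl, hql, hqj⟩)
    · exact Or.inl (Or.inl (Or.inl h))
    · exact Or.inl (Or.inr (Or.inl h))
    · exact Or.inl (Or.inl (Or.inr ⟨p, hp, hpi, hpj⟩))
    · exact Or.inr ⟨l, hl, Or.inl hil, Or.inl hjl⟩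
    · exact Or.inr ⟨l, hl, Or.inr ⟨p, hp, hpi, hpl⟩, Or.inl hjl⟩
    · exact Or.inr ⟨l, hl, Or.inl hil, Or.inr ⟨p, hp, hpj, hpl⟩⟩
    · exact Or.inr ⟨l, hl, Or.inr ⟨p, hp, hpi, hpl⟩, Or.inr ⟨q, hq, hqj, hql⟩⟩
  · rintro (((h | ⟨p, hp, hpi, hpj⟩) | (h | ⟨p, hp, hpj, hpi⟩)) |
      ⟨l, hl, (hil | ⟨p, hp, hpi, hpl⟩), (hjl | ⟨q, hq, hqj, hql⟩)⟩)
    · exact Or.inl h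
    · exact Or.inr (Or.inr (Or.inl ⟨p, hp, hpi, hpj⟩))
    · exact Or.inr (Or.inl h)
    · exact Or.inr (Or.inr (Or.inl ⟨p, hp, hpi, hpj⟩))
    · exact Or.inr (Or.inr (Or.inr (Or.inl ⟨l, hl, hil, hjl⟩)))
    · exact Or.inr (Or.inr (Or.inr (Or.inr (Or.inr (Or.inl ⟨q, l, hq, hl, hqj, hql, hil⟩)))))
    · exact Or.inr (Or.inr (Or.inr (Or.inr (Or.inl ⟨p, l, hp, hl, hpi, hpl, hjl⟩))))
    · exact Or.inr (Or.inr (Or.inr (Or.inr (Or.inr (Or.inr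
        ⟨p, q, l, hp, hq, hl, hpi, hpl, hql, hqj⟩)))))

lemma IsArm.mono (hmono : D' ≤ D) (hLL' : L ⊆ L') (h : IsArm D' L' a b) :
    IsArm D L a b :=
  h.imp (hmono a b) fun ⟨p, hp, hpa, hpb⟩ =>
    ⟨p, fun hpL => hp (hLL' hpL), hmono p a hpa, hmono p b hpb⟩

lemma StarConnIn.of_union (hmono : D' ≤ D) (h : StarConnIn D' (J ∪ L) i x) :
    StarConnIn D L i x ∨ ∃ v ∈ J, StarConnIn D L i v := by
  have hL : L ⊆ J ∪ L := Set.subset_union_right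
  rcases h with h | ⟨l, hlJ | hlL, hil, hxl⟩
  · exact Or.inl (Or.inl (h.imp (IsArm.mono hmono hL) (IsArm.mono hmono hL)))
  · exact Or.inr ⟨l, hlJ, Or.inl (Or.inl (hil.mono hmono hL))⟩
  · exact Or.inl (Or.inr ⟨l, hlL, hil.mono hmono hL, hxl.mono hmono hL⟩)

def ReroutesThrough (D D' : V → V → Prop) (J : Set V) : Prop :=
  ∀ a b, D a b → D' a b ∨ ∃ v ∈ J, D a v ∧ D v b

lemma IsArm.refine_left (hsplit : ReroutesThrough D D' J) (h : IsArm D L a b) :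
    IsArm D' (J ∪ L) a b ∨ ∃ v ∈ J, IsTrek D L a v := by
  rcases h with hab | ⟨p, hpL, hpa, hpb⟩
  · rcases hsplit a b hab with hab' | ⟨v, hv, hav, -⟩
    exacts [Or.inl (Or.inl hab'), Or.inr ⟨v, hv, Or.inl (Or.inl hav)⟩]
  by_cases hpJ : p ∈ J
  · exact Or.inr ⟨p, hpJ, Or.inr (Or.inl hpa)⟩
  rcases hsplit p a hpa with hpa' | ⟨v, hv, -, hva⟩
  · rcases hsplit p b hpb with hpb' | ⟨v, hv, hpv, -⟩
    · exact Or.inl (Or.inr ⟨p, fun hp => hp.elim hpJ hpL, hpa', hpb'⟩)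
    · exact Or.inr ⟨v, hv, Or.inl (Or.inr ⟨p, hpL, hpa, hpv⟩)⟩
  · exact Or.inr ⟨v, hv, Or.inr (Or.inl hva)⟩

lemma IsArm.refine_right (hsplit : ReroutesThrough D D' J) (h : IsArm D L a b) :
    IsArm D' (J ∪ L) a b ∨ ∃ v ∈ J, IsArm D L v b := by
  rcases h with hab | ⟨p, hpL, hpa, hpb⟩
  · rcases hsplit a b hab with hab' | ⟨v, hv, -, hvb⟩
    exacts [Or.inl (Or.inl hab'), Or.inr ⟨v, hv, Or.inl hvb⟩]
  by_cases hpJ : p ∈ J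
  · exact Or.inr ⟨p, hpJ, Or.inl hpb⟩
  rcases hsplit p b hpb with hpb' | ⟨v, hv, -, hvb⟩
  · rcases hsplit p a hpa with hpa' | ⟨v, hv, hpv, -⟩
    · exact Or.inl (Or.inr ⟨p, fun hp => hp.elim hpJ hpL, hpa', hpb'⟩)
    · exact Or.inr ⟨v, hv, Or.inr ⟨p, hpL, hpv, hpb⟩⟩
  · exact Or.inr ⟨v, hv, Or.inl hvb⟩

lemma IsTrek.refine (hsplit : ReroutesThrough D D' J) (h : IsTrek D L a b) :
    IsTrek D' (J ∪ L) a b ∨ ∃ v ∈ J, IsTrek D L a v := by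
  rcases h with h | h
  · exact (IsArm.refine_left hsplit h).imp_left Or.inl
  · rcases IsArm.refine_right hsplit h with h | ⟨v, hv, hva⟩
    exacts [Or.inl (Or.inr h), Or.inr ⟨v, hv, Or.inr hva⟩]

lemma StarConnIn.to_union (hsplit : ReroutesThrough D D' J)
    (hJ : ∀ v ∈ J, ¬ StarConnIn D L i v) (h : StarConnIn D L i x) :
    StarConnIn D' (J ∪ L) i x := by
  rcases h with h | ⟨l, hl, hil, hxl⟩
  · rcases IsTrek.refine hsplit h with h | ⟨v, hv, hiv⟩
    exacts [Or.inl h, (hJ v hv (Or.inl hiv)).elim]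
  rcases IsArm.refine_left hsplit hil with hil' | ⟨v, hv, hiv⟩
  · rcases IsArm.refine_right hsplit hxl with hxl' | ⟨v, hv, hvl⟩
    exacts [Or.inr ⟨l, Or.inr hl, hil', hxl'⟩, (hJ v hv (Or.inr ⟨l, hl, hil, hvl⟩)).elim]
  · exact (hJ v hv (Or.inl hiv)).elim

end Connection

section CriticalDAG

variable {E : V → V → Prop} {c : V → V → ℝ}

lemma antitone_critEdge : Antitone (critEdge E c) :=
  fun _ _ hLL' _ _ hab => ⟨hab.1, fun p hp v hv hvL => hab.2 p hp v hv (hLL' hvL)⟩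

lemma reroutesThrough_critEdge_union (J L : Set V) :
    ReroutesThrough (critEdge E c L) (critEdge E c (J ∪ L)) J := by
  intro a b ⟨hpath, hL⟩
  by_cases h : ∀ p, IsCritical E c a b p → ∀ v ∈ internalVerts p, v ∉ J ∪ L
  · exact Or.inl ⟨hpath, h⟩
  push Not at h
  obtain ⟨p, hp, v, hv, hvJL⟩ := h
  have hvJ : v ∈ J := hvJL.resolve_right (hL p hp v hv)
  obtain ⟨s, t, rfl⟩ := List.append_of_mem (List.mem_of_mem_tail (List.mem_of_mem_dropLast hv))
  obtain ⟨hs, ht⟩ := isPath_append_cons_iff.1 hp.1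
  refine Or.inr ⟨v, hvJ, ⟨⟨_, hs⟩, fun q hq x hx => ?_⟩, ⟨⟨_, ht⟩, fun r hr x hx => ?_⟩⟩
  · obtain ⟨q, rfl⟩ : ∃ q', q = q' ++ [v] :=
      ⟨_, (List.dropLast_append_getLast? _ hq.1.2.1).symm⟩
    rw [internalVerts_append_singleton] at hx
    exact hL _ (hp.replace_prefix hq) x (mem_internalVerts_append_cons_of_mem_tail hx)
  · obtain ⟨r, rfl⟩ : ∃ r', r = v :: r' := ⟨_, List.eq_cons_of_mem_head? hr.1.1⟩
    exact hL _ (hp.replace_suffix hr) x (mem_internalVerts_append_cons_of_mem_dropLast hx)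

end CriticalDAG

theorem stmt9_general (E : V → V → Prop) (c : V → V → ℝ) (I J K L : Set V) :
    CSepSets E c L I (J ∪ K) ↔
      (CSepSets E c L I J ∧ CSepSets E c (J ∪ L) I K) := by
  simp only [CSepSets, starConnSets, starConn_iff_starConnIn]
  have hmono := antitone_critEdge (E := E) (c := c) (Set.subset_union_right : L ⊆ J ∪ L)
  have hsplit := reroutesThrough_critEdge_union (E := E) (c := c) J L
  constructor
  · intro h
    refine ⟨fun ⟨i, hi, j, hj, hij⟩ => h ⟨i, hi, j, Or.inl hj, hij⟩, ?_⟩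
    rintro ⟨i, hi, k, hk, hik⟩
    rcases hik.of_union hmono with hik | ⟨v, hv, hiv⟩
    exacts [h ⟨i, hi, k, Or.inr hk, hik⟩, h ⟨i, hi, v, Or.inl hv, hiv⟩]
  · rintro ⟨hJ, hK⟩ ⟨i, hi, x, hx | hx, hix⟩
    · exact hJ ⟨i, hi, x, hx, hix⟩
    · have hJ' : ∀ v ∈ J, ¬ StarConnIn (critEdge E c L) L i v :=
        fun v hv hiv => hJ ⟨i, hi, v, hv, hiv⟩
      exact hK ⟨i, hi, x, hx, StarConnIn.to_union hsplit hJ' hix⟩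

/-- the semigraphoid decomposition/contraction property. -/
theorem stmt9 (E : V → V → Prop) (c : V → V → ℝ) (I J K L : Set V)
    (hIJ : Disjoint I J) (hIK : Disjoint I K) (hIL : Disjoint I L)
    (hJK : Disjoint J K) (hJL : Disjoint J L) (hKL : Disjoint K L) :
    CSepSets E c L I (J ∪ K) ↔
      (CSepSets E c L I J ∧ CSepSets E c (J ∪ L) I K) :=
  stmt9_general E c I J K L
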